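/- arXiv:1111.0321 — 2 statements merged into one kernel-verified Lean document; each statement's English description precedes it below -/
import Mathlib

section
/- If an initial configuration contains two distinct agents with identical enhanced views, and all agents are woken simultaneously and execute the same deterministic algorithm, then no agent ever meets any of its homologs (agents whose enhanced view equals its own); hence the configuration is not gatherable. -/
/-- A port-labeled graph on vertex type `V`: each node `v` has degree `deg v`, and
`next v p` gives, for a port `p < deg v`, the node reached by leaving `v` through
port `p` together with the entry port at that node (and `none` for invalid ports). -/
structure PGraph (V : Type) where
  deg : V → ℕ
  next : V → ℕ → Option (V × ℕ)

namespace PGraph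

variable {V : Type}

/-- Observation along a port sequence: the list of entry ports encountered and the
degree of the node finally reached (`none` if the port sequence is invalid).
The (infinite) view from a node is exactly the function `fun q => obs G v q`. -/
def obs (G : PGraph V) : V → List ℕ → Option (List ℕ × ℕ)
  | v, [] => some ([], G.deg v)
  | v, p :: q =>
    match G.next v p with
    | some (w, e) => (obs G w q).map fun r => (e :: r.1, r.2)
    | none => none

/-- Colored observation: additionally records the color of the reached node. -/
def cobs {C : Type} (G : PGraph V) (col : V → C) : V → List ℕ → Option (List ℕ × ℕ × C)
  | v, [] => some ([], G.deg v, col v)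
  | v, p :: q =>
    match G.next v p with
    | some (w, e) => (cobs G col w q).map fun r => (e :: r.1, r.2)
    | none => none

/-- Two nodes have equal views iff they give the same observation along every port
sequence. -/
def SameView (G : PGraph V) (v w : V) : Prop := ∀ q : List ℕ, G.obs v q = G.obs w q

/-- Equality of enhanced views (views with occupied nodes marked by `occ`). -/
def SameEView (G : PGraph V) (occ : V → Bool) (v w : V) : Prop :=
  ∀ q : List ℕ, G.cobs occ v q = G.cobs occ w q

/-- Equality of colored views, for an arbitrary coloring of the nodes. -/
def SameCView {C : Type} (G : PGraph V) (col : V → C) (v w : V) : Prop :=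
  ∀ q : List ℕ, G.cobs col v q = G.cobs col w q

/-- The node reached by following a port sequence. -/
def run (G : PGraph V) : V → List ℕ → Option V
  | v, [] => some v
  | v, p :: q =>
    match G.next v p with
    | some (w, _) => run G w q
    | none => none

def Connected (G : PGraph V) : Prop := ∀ v w : V, ∃ q : List ℕ, G.run v q = some w

/-- Well-formedness: ports `0,…,deg v - 1` are exactly the valid ports, entry ports are
valid ports of the target node, and the edge taken backwards by the entry port leads back. -/
def WellFormed (G : PGraph V) : Prop :=
  (∀ v p, (G.next v p).isSome ↔ p < G.deg v) ∧
  ∀ v p w e, G.next v p = some (w, e) → e < G.deg w ∧ G.next w e = some (v, p)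

end PGraph

/-- A deterministic algorithm for anonymous agents, with (abstract) memory type `M`.
`init d` is the memory of a freshly woken agent seeing that its node has degree `d`;
`upd m d mv S` is the new memory given the old memory `m`, the degree `d` of the current
node, the exit/entry ports `mv` of the move just performed (`none` if the agent stayed),
and the set `S` of memories of the other agents met at the current node;
`out m` is the move chosen: leave by port `p` (`some p`) or stay idle (`none`). -/
structure Algo (M : Type) where
  init : ℕ → M
  upd : M → ℕ → Option (ℕ × ℕ) → Set M → M
  out : M → Option ℕ

/-- Effect of a chosen move at node `v`: the resulting node together with the
(exit, entry) ports of the traversed edge (`none` if the agent stays put). -/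
def moveOf {V : Type} (G : PGraph V) (v : V) : Option ℕ → V × Option (ℕ × ℕ)
  | none => (v, none)
  | some p =>
    match G.next v p with
    | some (w, e) => (w, some (p, e))
    | none => (v, none)

/-- A synchronous execution, with simultaneous wake-up in round `0`, of the
deterministic algorithm `alg` by anonymous agents indexed by `A`, starting at the
distinct nodes `start a`.  `pos a t` / `mem a t` are the position / memory of agent `a`
at the end of round `t`. -/
structure Run {V A M : Type} (G : PGraph V) (start : A → V) (alg : Algo M) where
  startInj : Function.Injective start
  pos : A → ℕ → V
  mem : A → ℕ → M
  pos_zero : ∀ a, pos a 0 = start a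
  mem_zero : ∀ a, mem a 0 = alg.init (G.deg (start a))
  step_pos : ∀ a t, pos a (t + 1) = (moveOf G (pos a t) (alg.out (mem a t))).1
  step_mem : ∀ a t, mem a (t + 1) =
    alg.upd (mem a t) (G.deg (pos a (t + 1)))
      (moveOf G (pos a t) (alg.out (mem a t))).2
      { m : M | ∃ b : A, b ≠ a ∧ pos b (t + 1) = pos a (t + 1) ∧ mem b t = m }

/-!
Homologs have identical histories. By induction on rounds, two homologs `a` and `c` have
equal memories and have traversed the same port sequence, so they stand on nodes with equal
enhanced views. If an agent `d` meets `a`, then retracing `d`'s walk backwards (through the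
entry ports it recorded) from `c`'s node instead of `a`'s leads to an occupied node with the
enhanced view of `d`'s start: the start of a homolog `d'` of `d`, which has walked the same ports
forward and therefore now meets `c`. Hence `a` and `c` see the same set of memories and update
identically. Finally, homologs never share a node: walking the same ports from nodes with equal
views records the same entry ports, and retracing them from a common node leads back to a single
start.
-/

namespace PGraph

variable {V C : Type} {G : PGraph V} {col : V → C}

theorem run_append (v : V) (q q' : List ℕ) :
    G.run v (q ++ q') = (G.run v q).bind fun u => G.run u q' := by
  induction q generalizing v with
  | nil => rfl
  | cons p q ih =>
    simp only [List.cons_append, run]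
    cases G.next v p with
    | none => rfl
    | some we => exact ih we.1

theorem isSome_cobs (v : V) (q : List ℕ) : (G.cobs col v q).isSome = (G.run v q).isSome := by
  induction q generalizing v with
  | nil => rfl
  | cons p q ih =>
    simp only [cobs, run]
    cases G.next v p with
    | none => rfl
    | some we => simpa using ih we.1

theorem cobs_append_of_run {v u : V} {q : List ℕ} (h : G.run v q = some u) :
    ∃ E : List ℕ, ∀ q',
      G.cobs col v (q ++ q') = (G.cobs col u q').map fun r => (E ++ r.1, r.2) := by
  induction q generalizing v with
  | nil =>
    obtain rfl : v = u := Option.some.inj h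
    exact ⟨[], fun q' => by simp⟩
  | cons p q ih =>
    cases hn : G.next v p with
    | none => simp [run, hn] at h
    | some we =>
      simp only [run, hn] at h
      obtain ⟨E, hE⟩ := ih h
      exact ⟨we.2 :: E, fun q' => by simp [cobs, hn, hE, Option.map_map, Function.comp_def]⟩

theorem cobs_of_run {v u : V} {q : List ℕ} (h : G.run v q = some u) :
    ∃ E : List ℕ, G.cobs col v q = some (E, G.deg u, col u) := by
  obtain ⟨E, hE⟩ := cobs_append_of_run (col := col) h
  exact ⟨E, by simpa [cobs] using hE []⟩

theorem run_reverse (hwf : G.WellFormed) {x u : V} {q E : List ℕ} {d : ℕ} {c : C}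
    (hr : G.run x q = some u) (hc : G.cobs col x q = some (E, d, c)) :
    G.run u E.reverse = some x ∧ G.cobs col u E.reverse = some (q.reverse, G.deg x, col x) := by
  induction q generalizing x E with
  | nil =>
    obtain rfl : x = u := Option.some.inj hr
    obtain ⟨rfl, -⟩ : [] = E ∧ _ := by simpa [cobs] using hc
    simp [run, cobs]
  | cons p q ih =>
    cases hn : G.next x p with
    | none => simp [run, hn] at hr
    | some we =>
      obtain ⟨w, e⟩ := we
      simp only [run, hn] at hr
      obtain ⟨E', hq, rfl⟩ : ∃ E', G.cobs col w q = some (E', d, c) ∧ e :: E' = E := by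
        simpa [cobs, hn] using hc
      obtain ⟨hrun, hcobs⟩ := ih hr hq
      have hback : G.next w e = some (x, p) := (hwf.2 x p w e hn).2
      obtain ⟨F, hF⟩ := cobs_append_of_run (col := col) hrun
      obtain rfl : F = q.reverse := by simpa [cobs, hcobs] using (hF []).symm
      simp [run_append, hrun, hF, run, cobs, hback]

namespace SameCView

theorem symm {v w : V} (h : G.SameCView col v w) : G.SameCView col w v :=
  fun q => (h q).symm

theorem trans {u v w : V} (h : G.SameCView col u v) (h' : G.SameCView col v w) :
    G.SameCView col u w :=
  fun q => (h q).trans (h' q)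

theorem deg_eq {v w : V} (h : G.SameCView col v w) : G.deg v = G.deg w := by
  simpa [cobs] using congrArg (Option.map fun r => r.2.1) (h [])

theorem col_eq {v w : V} (h : G.SameCView col v w) : col v = col w := by
  simpa [cobs] using congrArg (Option.map fun r => r.2.2) (h [])

theorem run {v w x y : V} {q : List ℕ} (h : G.SameCView col v w) (hv : G.run v q = some x)
    (hw : G.run w q = some y) : G.SameCView col x y := by
  obtain ⟨E, hE⟩ := cobs_append_of_run (col := col) hv
  obtain ⟨F, hF⟩ := cobs_append_of_run (col := col) hw
  obtain rfl : E = F := by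
    have hq := h (q ++ [])
    rw [hE, hF] at hq
    simp only [cobs, Option.map_some, List.append_nil, Option.some.injEq, Prod.mk.injEq] at hq
    exact hq.1
  intro q'
  refine Option.map_injective (fun r s hrs => ?_) ((hE q').symm.trans ((h _).trans (hF q')))
  simpa [Prod.ext_iff] using hrs

theorem moveOf_snd {v w : V} (h : G.SameCView col v w) (o : Option ℕ) :
    (moveOf G v o).2 = (moveOf G w o).2 := by
  cases o with
  | none => rfl
  | some p =>
    have hp := h [p]
    cases hv : G.next v p <;> cases hw : G.next w p <;> simp_all [cobs, moveOf]

theorem eq_of_run_eq (hwf : G.WellFormed) {v w u : V} {q : List ℕ} (h : G.SameCView col v w)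
    (hv : G.run v q = some u) (hw : G.run w q = some u) : v = w := by
  obtain ⟨E, hE⟩ := cobs_of_run (col := col) hv
  exact Option.some.inj <|
    (run_reverse hwf hv hE).1.symm.trans (run_reverse hwf hw ((h q).symm.trans hE)).1

theorem exists_run_eq (hwf : G.WellFormed) {x y z : V} {q : List ℕ} (h : G.SameCView col x y)
    (hz : G.run z q = some x) : ∃ z', G.SameCView col z z' ∧ G.run z' q = some y := by
  obtain ⟨E, hE⟩ := cobs_of_run (col := col) hz
  obtain ⟨hx, hcx⟩ := run_reverse hwf hz hE
  have hcy := (h E.reverse).symm.trans hcx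
  obtain ⟨z', hy⟩ := Option.isSome_iff_exists.mp <| by
    rw [← isSome_cobs (col := col), hcy]; rfl
  refine ⟨z', h.run hx hy, ?_⟩
  simpa using (run_reverse hwf hy hcy).1

end SameCView

end PGraph

namespace Run

variable {V A M C : Type} {G : PGraph V} {start : A → V} {alg : Algo M} (r : Run G start alg)

def trace (a : A) : ℕ → List ℕ
  | 0 => []
  | t + 1 => trace a t ++ ((moveOf G (r.pos a t) (alg.out (r.mem a t))).2.map Prod.fst).toList

theorem run_moveOf (v : V) (o : Option ℕ) :
    G.run v (((moveOf G v o).2.map Prod.fst).toList) = some (moveOf G v o).1 := by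
  cases o with
  | none => rfl
  | some p => cases h : G.next v p <;> simp [moveOf, PGraph.run, h]

theorem run_trace (a : A) (t : ℕ) : G.run (start a) (r.trace a t) = some (r.pos a t) := by
  induction t with
  | zero => simp [trace, PGraph.run, r.pos_zero]
  | succ t ih => simp [trace, PGraph.run_append, ih, run_moveOf, r.step_pos]

variable {r} {col : V → C} {a c : A} {t : ℕ}

theorem sameCView_pos_of_trace_eq (h : G.SameCView col (start a) (start c))
    (ht : r.trace a t = r.trace c t) : G.SameCView col (r.pos a t) (r.pos c t) :=
  h.run (r.run_trace a t) (ht ▸ r.run_trace c t)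

theorem pos_ne_of_trace_eq (hwf : G.WellFormed) (hac : a ≠ c)
    (h : G.SameCView col (start a) (start c)) (ht : r.trace a t = r.trace c t) :
    r.pos a t ≠ r.pos c t := fun hpos =>
  hac <| r.startInj <| h.eq_of_run_eq hwf (r.run_trace a t) (ht ▸ hpos ▸ r.run_trace c t)

theorem trace_succ_eq (h : G.SameCView col (start a) (start c)) (hm : r.mem a t = r.mem c t)
    (ht : r.trace a t = r.trace c t) : r.trace a (t + 1) = r.trace c (t + 1) := by
  rw [trace, trace, ht, hm, (sameCView_pos_of_trace_eq h ht).moveOf_snd]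

variable {occ : V → Bool}

theorem exists_sameEView_pos_eq (hwf : G.WellFormed)
    (hocc : ∀ v : V, occ v = true ↔ ∃ a : A, start a = v)
    (htrace : ∀ a c, G.SameEView occ (start a) (start c) → r.trace a t = r.trace c t)
    (h : G.SameEView occ (start a) (start c)) {d : A} (hd : r.pos d t = r.pos a t) :
    ∃ d', G.SameEView occ (start d) (start d') ∧ r.pos d' t = r.pos c t := by
  obtain ⟨z, hz, hrun⟩ :=
    (sameCView_pos_of_trace_eq h (htrace a c h)).exists_run_eq hwf (hd ▸ r.run_trace d t)
  obtain ⟨d', rfl⟩ := (hocc z).mp (hz.col_eq ▸ (hocc (start d)).mpr ⟨d, rfl⟩)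
  refine ⟨d', hz, Option.some.inj ?_⟩
  rw [← r.run_trace d' t, ← htrace d d' hz, hrun]

theorem memoriesMet_subset (hwf : G.WellFormed)
    (hocc : ∀ v : V, occ v = true ↔ ∃ a : A, start a = v)
    (hmem : ∀ a c, G.SameEView occ (start a) (start c) → r.mem a t = r.mem c t)
    (htrace : ∀ a c, G.SameEView occ (start a) (start c) →
      r.trace a (t + 1) = r.trace c (t + 1))
    (h : G.SameEView occ (start a) (start c)) :
    {m | ∃ b, b ≠ a ∧ r.pos b (t + 1) = r.pos a (t + 1) ∧ r.mem b t = m} ⊆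
      {m | ∃ b, b ≠ c ∧ r.pos b (t + 1) = r.pos c (t + 1) ∧ r.mem b t = m} := by
  rintro m ⟨d, hda, hd, rfl⟩
  obtain ⟨d', hdd', hd'⟩ := exists_sameEView_pos_eq hwf hocc htrace h hd
  refine ⟨d', ?_, hd', (hmem d d' hdd').symm⟩
  rintro rfl
  have hda' : G.SameEView occ (start d) (start a) :=
    PGraph.SameCView.trans hdd' (PGraph.SameCView.symm h)
  exact pos_ne_of_trace_eq hwf hda hda' (htrace d a hda') hd

theorem mem_eq_and_trace_eq (hwf : G.WellFormed)
    (hocc : ∀ v : V, occ v = true ↔ ∃ a : A, start a = v) (t : ℕ) :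
    ∀ a c, G.SameEView occ (start a) (start c) →
      r.mem a t = r.mem c t ∧ r.trace a t = r.trace c t := by
  induction t with
  | zero => exact fun a c h => ⟨by rw [r.mem_zero, r.mem_zero, PGraph.SameCView.deg_eq h], rfl⟩
  | succ t ih =>
    have hmem a c h := (ih a c h).1
    have htrace a c h := trace_succ_eq h (ih a c h).1 (ih a c h).2
    intro a c h
    have hmet := (memoriesMet_subset hwf hocc hmem htrace h).antisymm
      (memoriesMet_subset hwf hocc hmem htrace (PGraph.SameCView.symm h))
    refine ⟨?_, htrace a c h⟩
    rw [r.step_mem, r.step_mem, hmet, (sameCView_pos_of_trace_eq h (htrace a c h)).deg_eq,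
      (sameCView_pos_of_trace_eq h (ih a c h).2).moveOf_snd, hmem a c h]

theorem pos_ne_of_sameEView (hwf : G.WellFormed)
    (hocc : ∀ v : V, occ v = true ↔ ∃ a : A, start a = v) (hac : a ≠ c)
    (h : G.SameEView occ (start a) (start c)) : r.pos a t ≠ r.pos c t :=
  pos_ne_of_trace_eq hwf hac h (mem_eq_and_trace_eq hwf hocc t a c h).2

end Run

theorem homologs_never_meet_general {V A M : Type}
    (G : PGraph V) (hwf : G.WellFormed)
    (start : A → V) (occ : V → Bool) (hocc : ∀ v : V, occ v = true ↔ ∃ a : A, start a = v)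
    (hhom : ∃ a b : A, a ≠ b ∧ G.SameEView occ (start a) (start b))
    (alg : Algo M) (r : Run G start alg) :
    (∀ (t : ℕ) (a b : A), a ≠ b → G.SameEView occ (start a) (start b) →
        r.pos a t ≠ r.pos b t) ∧
      ¬ ∃ (t : ℕ) (v : V), ∀ a : A, r.pos a t = v := by
  have hnever (t : ℕ) (a b : A) (hab : a ≠ b) (h : G.SameEView occ (start a) (start b)) :
      r.pos a t ≠ r.pos b t :=
    r.pos_ne_of_sameEView hwf hocc hab h
  refine ⟨hnever, ?_⟩
  rintro ⟨t, v, hv⟩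
  obtain ⟨a, b, hab, h⟩ := hhom
  exact hnever t a b hab h ((hv a).trans (hv b).symm)

/-- if an initial configuration contains two distinct agents with identical
enhanced views, and all agents are woken simultaneously and execute the same
deterministic algorithm, then no agent ever meets any of its homologs (agents whose
enhanced view equals its own); hence the configuration is not gatherable. -/
theorem homologs_never_meet {V A M : Type} [Fintype V] [Fintype A]
    (G : PGraph V) (hwf : G.WellFormed) (hconn : G.Connected)
    (start : A → V) (occ : V → Bool) (hocc : ∀ v : V, occ v = true ↔ ∃ a : A, start a = v)
    (hhom : ∃ a b : A, a ≠ b ∧ G.SameEView occ (start a) (start b))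
    (alg : Algo M) (r : Run G start alg) :
    (∀ (t : ℕ) (a b : A), a ≠ b → G.SameEView occ (start a) (start b) →
        r.pos a t ≠ r.pos b t) ∧
      ¬ ∃ (t : ℕ) (v : V), ∀ a : A, r.pos a t = v :=
  homologs_never_meet_general G hwf start occ hocc hhom alg r
end

section
/- There is no universal deterministic algorithm for gathering with detection that works for all gatherable configurations in all graphs when no upper bound on the graph size is known: any algorithm that gathers configuration C with detection in t rounds (after simultaneous wake-up) causes, in configuration D_{8t}, two agents to falsely declare gathering over in round t while the other agents are elsewhere. -/
/-- Condition G of the paper: there exist agents with different views, and each agent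
has a unique enhanced view (`occ` marks the nodes occupied in the initial
configuration). -/
def CondG {V A : Type} (G : PGraph V) (start : A → V) (occ : V → Bool) : Prop :=
  (∃ a b : A, ¬ G.SameView (start a) (start b)) ∧
    ∀ a b : A, a ≠ b → ¬ G.SameEView occ (start a) (start b)

/-- Configuration C's graph: a 4-cycle `v₀,v₁,v₂,v₃` (nodes `Sum.inl i`) with clockwise
ports 0,1 at each node (the edge `{vᵢ, vᵢ₊₁}` has port 0 at `vᵢ` and port 1 at `vᵢ₊₁`),
and pendant nodes of degree 1 (nodes `Sum.inr j`) attached to the two non-adjacent cycle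
nodes `v₀` and `v₂` by port 2 at the cycle node and port 0 at the leaf. -/
def graphC : PGraph (Fin 4 ⊕ Fin 2) where
  deg := fun x =>
    match x with
    | .inl i => if i.val % 2 = 0 then 3 else 2
    | .inr _ => 1
  next := fun x p =>
    match x with
    | .inl i =>
      if p = 0 then some (.inl (i + 1), 1)
      else if p = 1 then some (.inl (i - 1), 0)
      else if p = 2 ∧ i.val % 2 = 0 then
        some (.inr ⟨i.val / 2, by have := i.isLt; omega⟩, 0)
      else none
    | .inr j =>
      if p = 0 then some (.inl ⟨2 * j.val, by have := j.isLt; omega⟩, 2) else none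

/-- In configuration C the two agents start at `v₁` (a cycle node of degree 2) and at
its clockwise neighbor `v₂` (of degree 3). -/
def startC : Fin 2 → Fin 4 ⊕ Fin 2 := fun a => if a = 0 then .inl 1 else .inl 2

/-- The occupied nodes of configuration C. -/
def occC : Fin 4 ⊕ Fin 2 → Bool := fun x => decide (x = .inl 1 ∨ x = .inl 2)

/-- The graph of configuration `D n` (for even `n`): a cycle `v₀,…,v_{n-1}` (nodes
`Sum.inl i`) with clockwise ports 0,1, two pendant leaves attached to `v₀` (by ports 2
and 3 at `v₀`), and one pendant leaf attached to every other node of even index (by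
port 2).  The leaf `Sum.inr j` for `j < n / 2` is the leaf of `v_{2j}`, and
`Sum.inr (n / 2)` is the second leaf of `v₀`. -/
def graphD (n : ℕ) [NeZero n] : PGraph (Fin n ⊕ Fin (n / 2 + 1)) where
  deg := fun x =>
    match x with
    | .inl i => if i.val = 0 then 4 else if i.val % 2 = 0 then 3 else 2
    | .inr _ => 1
  next := fun x p =>
    match x with
    | .inl i =>
      if p = 0 then some (.inl (i + 1), 1)
      else if p = 1 then some (.inl (i - 1), 0)
      else if p = 2 ∧ i.val % 2 = 0 then
        some (.inr ⟨i.val / 2, by have := i.isLt; omega⟩, 0)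
      else if p = 3 ∧ i.val = 0 then some (.inr ⟨n / 2, by omega⟩, 0)
      else none
    | .inr j =>
      if p = 0 then
        if hj : j.val = n / 2 then
          some (.inl ⟨0, Nat.pos_of_ne_zero (NeZero.ne n)⟩, 3)
        else some (.inl ⟨2 * j.val, by have := j.isLt; omega⟩, 2)
      else none

/-- The agents of configuration `D n`: one agent on each cycle node `v_i` with
`i ≡ 0` or `i ≡ 3 (mod 4)`. -/
def AgentsD (n : ℕ) : Type := { i : Fin n // i.val % 4 = 0 ∨ i.val % 4 = 3 }

instance (n : ℕ) : Fintype (AgentsD n) := by unfold AgentsD; infer_instance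

/-- Starting positions of the agents of configuration `D n`. -/
def startD (n : ℕ) : AgentsD n → Fin n ⊕ Fin (n / 2 + 1) := fun a => .inl a.val

/-- The occupied nodes of configuration `D n`. -/
def occD (n : ℕ) : Fin n ⊕ Fin (n / 2 + 1) → Bool := fun x =>
  match x with
  | .inl i => decide (i.val % 4 = 0 ∨ i.val % 4 = 3)
  | .inr _ => false


/-!
The line `ℤ` with a leaf at every even node covers `graphC` (as its quotient by translation
by 4) and covers `graphD n` away from `v₀` (as its quotient by translation by `n`). Lift the
paths of the two agents of `C` to the line and translate them by multiples of 4, one copy for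
each agent of `D n`. By induction on `s`, an agent of `D n` that is farther than `s` from `v₀`
at time `s` (on this lifted path or at its actual position) stands at the image of its lifted
path and has the memory of its twin in `C`: everything it has seen, including the agents it
met, happened farther than `s - 1` from `v₀` one round earlier. For `n = 8t` this applies at
time `t` to the agents starting at `v_{4t-1}` and `v_{4t}`, so they declare like the agents of
`C`, while the agent starting at `v₀` is still within distance `t` of `v₀`.
-/

namespace PGraph

variable {V W : Type}

def walk (G : PGraph V) (f : ℕ → Option ℕ) (v : V) : ℕ → V
  | 0 => v
  | s + 1 => (moveOf G (walk G f v s) (f s)).1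

def CoversAt (G : PGraph V) (H : PGraph W) (π : V → W) (v : V) : Prop :=
  H.deg (π v) = G.deg v ∧ ∀ p, H.next (π v) p = (G.next v p).map (Prod.map π id)

theorem CoversAt.moveOf_eq {G : PGraph V} {H : PGraph W} {π : V → W} {v : V}
    (h : G.CoversAt H π v) (o : Option ℕ) :
    moveOf H (π v) o = Prod.map π id (moveOf G v o) := by
  rcases o with _ | p
  · rfl
  · simp only [moveOf, h.2 p]
    rcases G.next v p with _ | ⟨w, e⟩ <;> rfl

theorem walk_map {G : PGraph V} {H : PGraph W} {π : V → W} (h : ∀ v, G.CoversAt H π v)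
    (f : ℕ → Option ℕ) (v : V) (s : ℕ) : H.walk f (π v) s = π (G.walk f v s) := by
  induction s with
  | zero => rfl
  | succ s ih => simp only [walk, ih, (h _).moveOf_eq, Prod.map_fst]

end PGraph

namespace Run

variable {V A M : Type} {G : PGraph V} {start : A → V} {alg : Algo M}

def metMemories (r : Run G start alg) (a : A) (s : ℕ) : Set M :=
  {m | ∃ b, b ≠ a ∧ r.pos b (s + 1) = r.pos a (s + 1) ∧ r.mem b s = m}

theorem mem_succ (r : Run G start alg) (a : A) (s : ℕ) :
    r.mem a (s + 1) = alg.upd (r.mem a s) (G.deg (r.pos a (s + 1)))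
      (moveOf G (r.pos a s) (alg.out (r.mem a s))).2 (r.metMemories a s) :=
  r.step_mem a s

theorem pos_eq_walk (r : Run G start alg) (a : A) (s : ℕ) :
    r.pos a s = G.walk (fun k => alg.out (r.mem a k)) (start a) s := by
  induction s with
  | zero => exact r.pos_zero a
  | succ s ih => rw [r.step_pos, ih]; rfl

end Run

namespace GatheringLowerBound

open Set

/-- The universal cover of `graphC`, which also covers `graphD n` away from `v₀`: the line `ℤ`,
with ports numbered like their cycles and a leaf `Sum.inr k` attached to every even node `2k`. -/
def lineGraph : PGraph (ℤ ⊕ ℤ) where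
  deg
    | .inl z => if z % 2 = 0 then 3 else 2
    | .inr _ => 1
  next
    | .inl z, p =>
      if p = 0 then some (.inl (z + 1), 1)
      else if p = 1 then some (.inl (z - 1), 0)
      else if p = 2 ∧ z % 2 = 0 then some (.inr (z / 2), 0)
      else none
    | .inr k, p => if p = 0 then some (.inl (2 * k), 2) else none

def lineBase : ℤ ⊕ ℤ → ℤ
  | .inl z => z
  | .inr k => 2 * k

def shift (k : ℤ) : ℤ ⊕ ℤ → ℤ ⊕ ℤ := Sum.map (· + 4 * k) (· + 2 * k)

theorem lineBase_shift (k : ℤ) (v : ℤ ⊕ ℤ) : lineBase (shift k v) = lineBase v + 4 * k := by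
  rcases v with z | j <;> simp only [shift, Sum.map_inl, Sum.map_inr, lineBase]
  ring

theorem eq_of_shift_eq_shift {j k : ℤ} {v : ℤ ⊕ ℤ} (h : shift j v = shift k v) : j = k := by
  have := congrArg lineBase h
  rw [lineBase_shift, lineBase_shift] at this
  omega

theorem coversAt_shift (k : ℤ) (v : ℤ ⊕ ℤ) : lineGraph.CoversAt lineGraph (shift k) v := by
  rcases v with z | j
  · have hpar : (z + 4 * k) % 2 = 0 ↔ z % 2 = 0 := by omega
    refine ⟨by simp only [lineGraph, shift, Sum.map_inl, hpar], fun p => ?_⟩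
    simp only [lineGraph, shift, Sum.map_inl, hpar]
    split_ifs <;> simp <;> omega
  · refine ⟨rfl, fun p => ?_⟩
    simp only [lineGraph, shift, Sum.map_inr]
    split_ifs <;> simp
    ring

theorem abs_lineBase_moveOf_sub_le (v : ℤ ⊕ ℤ) (o : Option ℕ) :
    |lineBase (moveOf lineGraph v o).1 - lineBase v| ≤ 1 := by
  rcases o with _ | p
  · simp [moveOf]
  · rcases v with z | j <;> simp only [moveOf, lineGraph] <;> split_ifs <;>
      (simp [lineBase, abs_le]; try omega)

theorem abs_lineBase_walk_sub_le (f : ℕ → Option ℕ) (v : ℤ ⊕ ℤ) (s : ℕ) :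
    |lineBase (lineGraph.walk f v s) - lineBase v| ≤ s := by
  induction s with
  | zero => simp [PGraph.walk]
  | succ s ih =>
    have := abs_lineBase_moveOf_sub_le (lineGraph.walk f v s) (f s)
    rw [abs_le] at *
    push_cast
    simp only [PGraph.walk]
    constructor <;> linarith

/-- Node `z` of the line goes to node `z + 2` of the 4-cycle, so that the line nodes
`≡ 3, 0 (mod 4)`, where the agents of `D n` start, go to the starting nodes `v₁, v₂` of `C`. -/
def projC : ℤ ⊕ ℤ → Fin 4 ⊕ Fin 2
  | .inl z => .inl ⟨((z + 2) % 4).toNat, by omega⟩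
  | .inr k => .inr ⟨((k + 1) % 2).toNat, by omega⟩

theorem coversAt_projC (v : ℤ ⊕ ℤ) : lineGraph.CoversAt graphC projC v := by
  rcases v with z | j
  · have hpar : ((z + 2) % 4).toNat % 2 = 0 ↔ z % 2 = 0 := by omega
    refine ⟨by simp only [graphC, lineGraph, projC, hpar], fun p => ?_⟩
    simp only [graphC, lineGraph, projC, hpar]
    split_ifs <;> simp [projC, Fin.ext_iff, Fin.val_add, Fin.val_sub] <;> omega
  · refine ⟨rfl, fun p => ?_⟩
    simp only [graphC, lineGraph, projC]
    split_ifs <;> simp [projC, Fin.ext_iff]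
    omega

theorem projC_shift (k : ℤ) (v : ℤ ⊕ ℤ) : projC (shift k v) = projC v := by
  rcases v with z | j <;> simp only [projC, shift, Sum.map_inl, Sum.map_inr] <;>
    congr 2 <;> omega

theorem exists_shift_of_projC_eq {v w : ℤ ⊕ ℤ} (h : projC v = projC w) :
    ∃ k, v = shift k w := by
  rcases v with z | j <;> rcases w with z' | j' <;> simp [projC, Fin.ext_iff] at h
  · exact ⟨(z - z') / 4, by simp [shift]; omega⟩
  · exact ⟨(j - j') / 2, by simp [shift]; omega⟩

open Fin.CommRing in
def projD (n : ℕ) [NeZero n] : ℤ ⊕ ℤ → Fin n ⊕ Fin (n / 2 + 1)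
  | .inl z => .inl (z : Fin n)
  | .inr k => .inr ⟨((2 * k : ℤ) : Fin n).val / 2, by have := ((2 * k : ℤ) : Fin n).isLt; omega⟩

def baseD (n : ℕ) : Fin n ⊕ Fin (n / 2 + 1) → ℕ
  | .inl i => i
  | .inr j => if j.val = n / 2 then 0 else 2 * j.val

open Fin.CommRing in
theorem val_intCast_of_mem_Ico {n : ℕ} [NeZero n] {z : ℤ} (h : z ∈ Ico (0 : ℤ) n) :
    ((z : Fin n) : ℤ) = z := by
  rw [Fin.val_intCast, Int.emod_eq_of_lt h.1 h.2, Int.toNat_of_nonneg h.1]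

open Fin.CommRing in
theorem projD_inl_val {n : ℕ} [NeZero n] (i : Fin n) : projD n (.inl (i.val : ℤ)) = .inl i := by
  simp [projD]

theorem baseD_projD {n : ℕ} [NeZero n] (hn : Even n) (v : ℤ ⊕ ℤ) :
    (baseD n (projD n v) : ℤ) = lineBase v % n := by
  have hpos : (0 : ℤ) < n := by have := NeZero.ne n; omega
  rcases v with z | k
  · simp [baseD, projD, lineBase, Int.toNat_of_nonneg (Int.emod_nonneg z hpos.ne')]
  · have h0 := Int.emod_nonneg (2 * k) hpos.ne'
    have h1 := Int.emod_lt_of_pos (2 * k) hpos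
    have h2 : 2 * k % n % 2 = 0 := by
      rw [Int.emod_emod_of_dvd _ (by exact_mod_cast (even_iff_two_dvd.mp hn))]
      omega
    obtain ⟨m, hm⟩ := hn
    simp only [baseD, projD, Fin.val_intCast, lineBase]
    split_ifs <;> omega

open Fin.CommRing in
theorem coversAt_projD {n : ℕ} [NeZero n] (hn : Even n) {v : ℤ ⊕ ℤ}
    (hv : lineBase v ∈ Ioo (0 : ℤ) n) : lineGraph.CoversAt (graphD n) (projD n) v := by
  obtain ⟨m, rfl⟩ := hn
  rcases v with z | k <;> simp only [lineBase, mem_Ioo] at hv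
  · have hz : ((z : Fin (m + m)) : ℤ) = z := val_intCast_of_mem_Ico ⟨hv.1.le, hv.2⟩
    have h0 : ((z : Fin (m + m)) : ℕ) ≠ 0 := by omega
    have hpar : ((z : Fin (m + m)) : ℕ) % 2 = 0 ↔ z % 2 = 0 := by omega
    refine ⟨by simp only [graphD, lineGraph, projD, h0, hpar, if_false], fun p => ?_⟩
    simp only [graphD, lineGraph, projD, hpar, h0, and_false, if_false]
    split_ifs
    · simp only [projD, Option.map_some, Prod.map, id, Int.cast_add, Int.cast_one]
    · simp only [projD, Option.map_some, Prod.map, id, Int.cast_sub, Int.cast_one]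
    · have h2z : 2 * (z / 2) = z := by omega
      simp [projD, h2z]
    · rfl
  · have hk : (((2 * k : ℤ) : Fin (m + m)) : ℤ) = 2 * k := val_intCast_of_mem_Ico ⟨by omega, hv.2⟩
    have hj : ((2 * k : ℤ) : Fin (m + m)).val / 2 ≠ (m + m) / 2 := by omega
    refine ⟨rfl, fun p => ?_⟩
    simp only [graphD, lineGraph, projD, hj, dite_false]
    split_ifs
    · simp only [projD, Option.map_some, Prod.map, id, Option.some.injEq, Prod.mk.injEq,
        Sum.inl.injEq, and_true, Fin.ext_iff]
      omega
    · rfl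

theorem injOn_projD {n : ℕ} [NeZero n] (hn : Even n) :
    InjOn (projD n) (lineBase ⁻¹' Ioo (0 : ℤ) n) := by
  intro v hv w hw h
  have hb := congrArg (fun x => (baseD n x : ℤ)) h
  simp only [mem_preimage, mem_Ioo] at hv hw
  simp only [baseD_projD hn, Int.emod_eq_of_lt hv.1.le hv.2,
    Int.emod_eq_of_lt hw.1.le hw.2] at hb
  rcases v with z | k <;> rcases w with z' | k' <;> simp only [lineBase] at hb
  · rw [hb]
  · exact absurd h Sum.inl_ne_inr
  · exact absurd h Sum.inr_ne_inl
  · rw [show k = k' by omega]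

theorem mem_Ioo_baseD_of_moveOf {n : ℕ} [NeZero n] {s : ℕ} {v : Fin n ⊕ Fin (n / 2 + 1)}
    {o : Option ℕ}
    (h : (baseD n (moveOf (graphD n) v o).1 : ℤ) ∈ Ioo ((s + 1 : ℕ) : ℤ) (n - (s + 1 : ℕ))) :
    (baseD n v : ℤ) ∈ Ioo (s : ℤ) (n - s) := by
  obtain ⟨n, rfl⟩ : ∃ m, n = m + 1 := ⟨n - 1, by have := NeZero.ne n; omega⟩
  simp only [mem_Ioo] at h ⊢
  rcases o with _ | p
  · simp only [moveOf] at h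
    omega
  rcases v with i | j
  · have hsucc := Fin.val_add_one i
    have hpred := Fin.coe_sub_one i
    simp only [Fin.ext_iff, Fin.val_last, Fin.val_zero] at hsucc hpred
    simp only [moveOf, graphD] at h
    split_ifs at h <;> simp only [baseD, hsucc, hpred] at h ⊢ <;> (try split_ifs at h) <;> omega
  · simp only [moveOf, graphD] at h
    split_ifs at h <;> simp only [baseD] at h ⊢ <;> (try split_ifs at h ⊢) <;> omega

def startLine (c : Fin 2) : ℤ := if c = 0 then -1 else 0

theorem projC_startLine (c : Fin 2) : projC (.inl (startLine c)) = startC c := by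
  fin_cases c <;> rfl

section Agents

variable {n : ℕ}

/-- The agent of `C` whose moves `a` copies. -/
def twin (a : AgentsD n) : Fin 2 := if a.1.val % 4 = 3 then 0 else 1

def block (a : AgentsD n) : ℤ := (a.1.val + 1) / 4

theorem twin_eq_zero {a : AgentsD n} (h : a.1.val % 4 = 3) : twin a = 0 := if_pos h

theorem twin_eq_one {a : AgentsD n} (h : a.1.val % 4 = 0) : twin a = 1 := if_neg (by omega)

theorem val_agent_eq (a : AgentsD n) : (a.1.val : ℤ) = 4 * block a + startLine (twin a) := by
  rcases a.2 with h | h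
  · rw [twin_eq_one h, block]
    simp [startLine]
    omega
  · rw [twin_eq_zero h, block]
    simp [startLine]
    omega

theorem agent_ext {a b : AgentsD n} (htwin : twin a = twin b) (hblock : block a = block b) :
    a = b := by
  have ha := val_agent_eq a
  rw [htwin, hblock, ← val_agent_eq b] at ha
  exact Subtype.ext (Fin.ext (by exact_mod_cast ha))

theorem exists_agent (c : Fin 2) (k : ℤ) (h : 4 * k + startLine c ∈ Ico (0 : ℤ) n) :
    ∃ b : AgentsD n, twin b = c ∧ block b = k := by
  simp only [mem_Ico] at h
  have hmod : (4 * k + startLine c).toNat % 4 = 0 ∨ (4 * k + startLine c).toNat % 4 = 3 := by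
    fin_cases c <;> simp [startLine] at h ⊢ <;> omega
  refine ⟨⟨⟨(4 * k + startLine c).toNat, by omega⟩, hmod⟩, ?_, ?_⟩ <;>
    fin_cases c <;> simp [twin, block, startLine] at h ⊢ <;> omega

end Agents

section Simulation

variable {M : Type} {alg : Algo M}

def liftC (rC : Run graphC startC alg) (c : Fin 2) : ℕ → ℤ ⊕ ℤ :=
  lineGraph.walk (fun k => alg.out (rC.mem c k)) (.inl (startLine c))

theorem pos_eq_projC_liftC (rC : Run graphC startC alg) (c : Fin 2) (s : ℕ) :
    rC.pos c s = projC (liftC rC c s) := by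
  rw [rC.pos_eq_walk, ← projC_startLine, PGraph.walk_map coversAt_projC]
  rfl

theorem mem_succ_eq_liftC (rC : Run graphC startC alg) (c : Fin 2) (s : ℕ) :
    rC.mem c (s + 1) = alg.upd (rC.mem c s) (lineGraph.deg (liftC rC c (s + 1)))
      (moveOf lineGraph (liftC rC c s) (alg.out (rC.mem c s))).2 (rC.metMemories c s) := by
  rw [rC.mem_succ, pos_eq_projC_liftC, pos_eq_projC_liftC, (coversAt_projC _).1,
    (coversAt_projC _).moveOf_eq]
  rfl

theorem abs_lineBase_liftC_sub_le (rC : Run graphC startC alg) (c : Fin 2) (s : ℕ) :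
    |lineBase (liftC rC c s) - startLine c| ≤ s :=
  abs_lineBase_walk_sub_le _ _ s

variable {n : ℕ}

/-- The path that agent `a` of `D n` follows as long as it stays far from `v₀`. -/
def liftD (rC : Run graphC startC alg) (a : AgentsD n) (s : ℕ) : ℤ ⊕ ℤ :=
  shift (block a) (liftC rC (twin a) s)

theorem liftD_zero (rC : Run graphC startC alg) (a : AgentsD n) :
    liftD rC a 0 = .inl (a.1.val : ℤ) := by
  rw [val_agent_eq a]
  simp only [liftD, liftC, PGraph.walk, shift, Sum.map_inl]
  ring_nf

theorem liftD_succ (rC : Run graphC startC alg) (a : AgentsD n) (s : ℕ) :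
    liftD rC a (s + 1) = (moveOf lineGraph (liftD rC a s) (alg.out (rC.mem (twin a) s))).1 := by
  simp only [liftD, (coversAt_shift _ _).moveOf_eq]
  rfl

theorem abs_lineBase_liftD_sub_le (rC : Run graphC startC alg) (a : AgentsD n) (s : ℕ) :
    |lineBase (liftD rC a s) - a.1.val| ≤ s := by
  rw [liftD, lineBase_shift, val_agent_eq a]
  convert abs_lineBase_liftC_sub_le rC (twin a) s using 2
  ring

variable (rC : Run graphC startC alg) [NeZero n] (rD : Run (graphD n) (startD n) alg)

def FarAt (a : AgentsD n) (s : ℕ) : Prop :=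
  lineBase (liftD rC a s) ∈ Ioo (s : ℤ) (n - s) ∨ (baseD n (rD.pos a s) : ℤ) ∈ Ioo (s : ℤ) (n - s)

def Simulates (a : AgentsD n) (s : ℕ) : Prop :=
  rD.pos a s = projD n (liftD rC a s) ∧ rD.mem a s = rC.mem (twin a) s ∧
    lineBase (liftD rC a s) ∈ Ioo (s : ℤ) (n - s)

variable {rC rD}

theorem FarAt.of_succ {a : AgentsD n} {s : ℕ} (h : FarAt rC rD a (s + 1)) : FarAt rC rD a s := by
  rcases h with h | h
  · left
    have := abs_lineBase_moveOf_sub_le (liftD rC a s) (alg.out (rC.mem (twin a) s))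
    rw [← liftD_succ, abs_le] at this
    simp only [mem_Ioo] at h ⊢
    push_cast at h
    constructor <;> linarith
  · right
    rw [rD.step_pos] at h
    exact mem_Ioo_baseD_of_moveOf h

theorem simulates_zero (hn : Even n) {a : AgentsD n} (h : FarAt rC rD a 0) :
    Simulates rC rD a 0 := by
  have hstart : rD.pos a 0 = projD n (liftD rC a 0) := by
    rw [rD.pos_zero, liftD_zero, projD_inl_val]
    rfl
  have hfar : lineBase (liftD rC a 0) ∈ Ioo ((0 : ℕ) : ℤ) (n - (0 : ℕ)) := by
    rcases h with h | h
    · exact h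
    · rw [hstart, baseD_projD hn, liftD_zero] at h
      have hlt : (a.1.val : ℤ) < n := by exact_mod_cast a.1.isLt
      rwa [liftD_zero, lineBase, ← Int.emod_eq_of_lt (by positivity) hlt]
  refine ⟨hstart, ?_, hfar⟩
  have hcov := coversAt_projD hn (v := liftD rC a 0) (by simpa using hfar)
  rw [rD.mem_zero, rC.mem_zero, ← rD.pos_zero, ← rC.pos_zero, hstart, hcov.1,
    pos_eq_projC_liftC, (coversAt_projC _).1, liftD, (coversAt_shift _ _).1]

theorem pos_succ_of_simulates (hn : Even n) {a : AgentsD n} {s : ℕ} (hs : Simulates rC rD a s)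
    (h : FarAt rC rD a (s + 1)) :
    rD.pos a (s + 1) = projD n (liftD rC a (s + 1)) ∧
      lineBase (liftD rC a (s + 1)) ∈ Ioo ((s + 1 : ℕ) : ℤ) (n - (s + 1 : ℕ)) := by
  obtain ⟨hpos, hmem, hfar⟩ := hs
  have hcov := coversAt_projD hn (v := liftD rC a s) (by simp only [mem_Ioo] at hfar ⊢; omega)
  have hpos' : rD.pos a (s + 1) = projD n (liftD rC a (s + 1)) := by
    rw [rD.step_pos, hpos, hmem, hcov.moveOf_eq, liftD_succ]
    rfl
  refine ⟨hpos', ?_⟩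
  rcases h with h | h
  · exact h
  have hstep := abs_lineBase_moveOf_sub_le (liftD rC a s) (alg.out (rC.mem (twin a) s))
  rw [← liftD_succ, abs_le] at hstep
  rw [hpos', baseD_projD hn] at h
  simp only [mem_Ioo] at hfar h ⊢
  push_cast at h ⊢
  -- the lifted position is in `[0, n]`, and `n` itself would be reduced to `v₀`
  rcases (show lineBase (liftD rC a (s + 1)) < n ∨ lineBase (liftD rC a (s + 1)) = n by omega)
    with hlt | heq
  · rwa [Int.emod_eq_of_lt (by omega) hlt] at h
  · rw [heq, Int.emod_self] at h
    omega

theorem metMemories_subset (hn : Even n) {s : ℕ}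
    (ih : ∀ b, FarAt rC rD b s → Simulates rC rD b s) {a : AgentsD n}
    (hpos : rD.pos a (s + 1) = projD n (liftD rC a (s + 1)))
    (hfar : lineBase (liftD rC a (s + 1)) ∈ Ioo ((s + 1 : ℕ) : ℤ) (n - (s + 1 : ℕ))) :
    rD.metMemories a s ⊆ rC.metMemories (twin a) s := by
  rintro _ ⟨b, hba, hmeet, rfl⟩
  simp only [mem_Ioo] at hfar
  have hfarb : FarAt rC rD b (s + 1) := by
    right
    rwa [hmeet, hpos, baseD_projD hn, Int.emod_eq_of_lt (by omega) (by omega)]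
  have hb := ih b hfarb.of_succ
  obtain ⟨hposb, hfarb'⟩ := pos_succ_of_simulates hn hb hfarb
  simp only [mem_Ioo] at hfarb'
  have hlift : liftD rC b (s + 1) = liftD rC a (s + 1) :=
    injOn_projD hn (by simp only [mem_preimage, mem_Ioo]; omega)
      (by simp only [mem_preimage, mem_Ioo]; omega) (hposb.symm.trans (hmeet.trans hpos))
  refine ⟨twin b, fun htwin => hba (agent_ext htwin ?_), ?_, hb.2.1.symm⟩
  · rw [liftD, liftD, htwin] at hlift
    exact eq_of_shift_eq_shift hlift
  · rw [pos_eq_projC_liftC, pos_eq_projC_liftC, ← projC_shift (block b),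
      ← projC_shift (block a) (liftC rC (twin a) _)]
    exact congrArg projC hlift

theorem metMemories_supset (hn : Even n) {s : ℕ}
    (ih : ∀ b, FarAt rC rD b s → Simulates rC rD b s) {a : AgentsD n}
    (hpos : rD.pos a (s + 1) = projD n (liftD rC a (s + 1)))
    (hfar : lineBase (liftD rC a (s + 1)) ∈ Ioo ((s + 1 : ℕ) : ℤ) (n - (s + 1 : ℕ))) :
    rC.metMemories (twin a) s ⊆ rD.metMemories a s := by
  rintro _ ⟨c, hca, hmeet, rfl⟩
  rw [pos_eq_projC_liftC, pos_eq_projC_liftC, ← projC_shift (block a) (liftC rC (twin a) _)]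
    at hmeet
  obtain ⟨k, hk : liftD rC a (s + 1) = shift k (liftC rC c (s + 1))⟩ :=
    exists_shift_of_projC_eq hmeet.symm
  have hdrift := abs_lineBase_liftC_sub_le rC c (s + 1)
  have hbase := congrArg lineBase hk
  rw [lineBase_shift k] at hbase
  -- the agent of `D n` met by `a` is the translate of `c` by `4k`
  obtain ⟨b, rfl, rfl⟩ := exists_agent (n := n) c k (by
    simp only [mem_Ioo] at hfar
    rw [abs_le] at hdrift
    push_cast at hfar hdrift
    simp only [mem_Ico]
    omega)
  have hlift : liftD rC b (s + 1) = liftD rC a (s + 1) := hk.symm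
  have hfarb : FarAt rC rD b (s + 1) := Or.inl (hlift ▸ hfar)
  have hb := ih b hfarb.of_succ
  refine ⟨b, fun hba => hca (hba ▸ rfl), ?_, hb.2.1⟩
  rw [(pos_succ_of_simulates hn hb hfarb).1, hpos, hlift]

theorem simulates_of_farAt (hn : Even n) (s : ℕ) :
    ∀ a : AgentsD n, FarAt rC rD a s → Simulates rC rD a s := by
  induction s with
  | zero => exact fun a => simulates_zero hn
  | succ s ih =>
    intro a h
    have hs := ih a h.of_succ
    obtain ⟨hpos, hfar⟩ := pos_succ_of_simulates hn hs h
    have hcov := coversAt_projD hn (v := liftD rC a s)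
      (by have := hs.2.2; simp only [mem_Ioo] at this ⊢; omega)
    have hcov' := coversAt_projD hn (v := liftD rC a (s + 1))
      (by simp only [mem_Ioo] at hfar ⊢; omega)
    refine ⟨hpos, ?_, hfar⟩
    rw [rD.mem_succ, mem_succ_eq_liftC, hpos, hcov'.1, hs.1, hs.2.1, hcov.moveOf_eq,
      (metMemories_subset hn ih hpos hfar).antisymm (metMemories_supset hn ih hpos hfar)]
    simp only [liftD, (coversAt_shift _ _).1, (coversAt_shift _ _).moveOf_eq]
    rfl

variable (rC rD) in
theorem simulates_of_far_start (hn : Even n) (a : AgentsD n) (s : ℕ)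
    (h : (a.1.val : ℤ) ∈ Ioo (2 * s : ℤ) (n - 2 * s)) : Simulates rC rD a s := by
  refine simulates_of_farAt hn s a (Or.inl ?_)
  have := abs_le.mp (abs_lineBase_liftD_sub_le rC a s)
  simp only [mem_Ioo] at h ⊢
  omega

end Simulation

theorem agent_val_pos_of_far {M : Type} {alg : Algo M} {n : ℕ} [NeZero n]
    (rD : Run (graphD n) (startD n) alg) (a : AgentsD n) (s : ℕ)
    (h : (baseD n (rD.pos a s) : ℤ) ∈ Ioo (s : ℤ) (n - s)) : 0 < a.1.val := by
  induction s with
  | zero =>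
    rw [rD.pos_zero] at h
    exact_mod_cast h.1
  | succ s ih =>
    rw [rD.step_pos] at h
    exact ih (mem_Ioo_baseD_of_moveOf h)

end GatheringLowerBound

open GatheringLowerBound

/-- there is no universal deterministic algorithm for gathering with
detection working for all gatherable configurations in all graphs when no upper bound on
the graph size is known.  Concretely: for any deterministic algorithm (given by `alg`
together with a declaration predicate `declare` on memories), if with simultaneous
wake-up it gathers configuration C with detection in `t` rounds (all agents at one node
in round `t`, all declaring that gathering is over), then in configuration `D (8t)` the
two agents starting at `v_{4t-1}` and `v_{4t}` falsely declare gathering over in round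
`t`, while not all agents are at one node in round `t`. -/
theorem no_universal_gathering_with_detection {M : Type}
    (alg : Algo M) (declare : M → Bool) (t : ℕ) (ht : 0 < t) [NeZero (8 * t)]
    (rC : Run graphC startC alg)
    (hC : ∃ v : Fin 4 ⊕ Fin 2, ∀ a : Fin 2,
      rC.pos a t = v ∧ declare (rC.mem a t) = true)
    (rD : Run (graphD (8 * t)) (startD (8 * t)) alg) :
    declare (rD.mem ⟨⟨4 * t - 1, by omega⟩, Or.inr (show (4 * t - 1) % 4 = 3 by omega)⟩ t)
        = true ∧
      declare (rD.mem ⟨⟨4 * t, by omega⟩, Or.inl (show (4 * t) % 4 = 0 by omega)⟩ t)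
        = true ∧
      ¬ ∃ v : Fin (8 * t) ⊕ Fin (8 * t / 2 + 1), ∀ a : AgentsD (8 * t), rD.pos a t = v := by
  obtain ⟨v, hv⟩ := hC
  have hn : Even (8 * t) := ⟨4 * t, by ring⟩
  let a₀ : AgentsD (8 * t) := ⟨⟨0, by omega⟩, Or.inl rfl⟩
  let a₁ : AgentsD (8 * t) := ⟨⟨4 * t - 1, by omega⟩, Or.inr (show (4 * t - 1) % 4 = 3 by omega)⟩
  let a₂ : AgentsD (8 * t) := ⟨⟨4 * t, by omega⟩, Or.inl (show 4 * t % 4 = 0 by omega)⟩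
  obtain ⟨-, hmem₁, -⟩ := simulates_of_far_start rC rD hn a₁ t
    (show ((4 * t - 1 : ℕ) : ℤ) ∈ Set.Ioo _ _ by simp only [Set.mem_Ioo]; omega)
  obtain ⟨hpos₂, hmem₂, hfar₂⟩ := simulates_of_far_start rC rD hn a₂ t
    (show ((4 * t : ℕ) : ℤ) ∈ Set.Ioo _ _ by simp only [Set.mem_Ioo]; omega)
  refine ⟨?_, ?_, ?_⟩
  · change declare (rD.mem a₁ t) = true
    rw [hmem₁, twin_eq_zero (show (4 * t - 1) % 4 = 3 by omega)]
    exact (hv 0).2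
  · change declare (rD.mem a₂ t) = true
    rw [hmem₂, twin_eq_one (show 4 * t % 4 = 0 by omega)]
    exact (hv 1).2
  · rintro ⟨u, hu⟩
    have h₀ : (baseD (8 * t) (rD.pos a₀ t) : ℤ) ∈ Set.Ioo (t : ℤ) (8 * t - t) := by
      simp only [Set.mem_Ioo] at hfar₂
      rw [hu a₀, ← hu a₂, hpos₂, baseD_projD hn, Int.emod_eq_of_lt (by omega) (by omega)]
      exact_mod_cast hfar₂
    exact (agent_val_pos_of_far rD a₀ t h₀).ne rfl
end
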